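/- arXiv:2307.13820 — 3 statements merged into one kernel-verified Lean document; each statement's English description precedes it below -/
import Mathlib

section
/- Let φ be an orthonormal p-frame and define, for any p-frame y, P_φ(y) = y − φ·sym⟨⟨φ,y⟩⟩ and P_φ^⊥(y) = φ·sym⟨⟨φ,y⟩⟩. Then: (i) P_φ(y) ∈ T_φ; (ii) (P_φ^⊥(y), η)_H = 0 for every η ∈ T_φ; (iii) y = P_φ(y) + P_φ^⊥(y); (iv) P_φ(P_φ(y)) = P_φ(y); and (v) P_φ(φ·S) = 0 for every symmetric real p×p matrix S. -/
open Matrix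

noncomputable section

/-- The outer product of two `p`-frames: `⟨⟨v,w⟩⟩ᵢⱼ = ⟪vᵢ, wⱼ⟫`. -/
def frameOuter {H : Type*} [NormedAddCommGroup H] [InnerProductSpace ℝ H] {p : ℕ}
    (v w : Fin p → H) : Matrix (Fin p) (Fin p) ℝ :=
  fun i j => (inner ℝ (v i) (w j) : ℝ)

/-- The action of a real `p × p` matrix on a `p`-frame: `(v·A)ⱼ = ∑ᵢ Aᵢⱼ • vᵢ`. -/
def frameAct {H : Type*} [NormedAddCommGroup H] [InnerProductSpace ℝ H] {p : ℕ}
    (v : Fin p → H) (A : Matrix (Fin p) (Fin p) ℝ) : Fin p → H :=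
  fun j => ∑ i, A i j • v i

/-- The `L²`-type inner product of two `p`-frames: `(v,w)_H = ∑ⱼ ⟪vⱼ, wⱼ⟫`. -/
def frameInner {H : Type*} [NormedAddCommGroup H] [InnerProductSpace ℝ H] {p : ℕ}
    (v w : Fin p → H) : ℝ :=
  ∑ j, (inner ℝ (v j) (w j) : ℝ)

/-- The symmetric part of a square matrix: `sym M = (M + Mᵀ)/2`. -/
def symPart {p : ℕ} (M : Matrix (Fin p) (Fin p) ℝ) : Matrix (Fin p) (Fin p) ℝ :=
  (1 / 2 : ℝ) • (M + Mᵀ)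

/-- The orthogonal projection onto the tangent space: `P_φ(y) = y − φ·sym⟨⟨φ,y⟩⟩`. -/
def tangentProj {H : Type*} [NormedAddCommGroup H] [InnerProductSpace ℝ H] {p : ℕ}
    (φ y : Fin p → H) : Fin p → H :=
  y - frameAct φ (symPart (frameOuter φ y))

/-- The orthogonal projection onto the normal space: `P_φ^⊥(y) = φ·sym⟨⟨φ,y⟩⟩`. -/
def normalProj {H : Type*} [NormedAddCommGroup H] [InnerProductSpace ℝ H] {p : ℕ}
    (φ y : Fin p → H) : Fin p → H :=
  frameAct φ (symPart (frameOuter φ y))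

/-! For orthonormal `φ` everything reduces to matrix identities through `⟨⟨φ, φ·A⟩⟩ = A`:
`⟨⟨φ, P_φ y⟩⟩ = M - sym M` with `M = ⟨⟨φ, y⟩⟩` has zero symmetric part, and
`(φ·S, η)_H = tr (S ⟨⟨φ, η⟩⟩)` is the Frobenius pairing of a symmetric and a skew-symmetric
matrix, hence zero. -/

theorem Matrix.trace_mul_eq_zero_of_transpose_eq_neg {n R : Type*} [Fintype n] [CommRing R]
    [NoZeroDivisors R] [CharZero R] {S N : Matrix n n R} (hS : Sᵀ = S) (hN : Nᵀ = -N) :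
    trace (S * N) = 0 := by
  have h : trace (S * N) = -trace (S * N) := by
    calc trace (S * N) = trace ((S * N)ᵀ) := (trace_transpose _).symm
      _ = trace (-(N * S)) := by rw [transpose_mul, hS, hN, neg_mul]
      _ = -trace (S * N) := by rw [trace_neg, trace_mul_comm]
  exact self_eq_neg.mp h

section SymPart

variable {p : ℕ}

theorem symPart_transpose (M : Matrix (Fin p) (Fin p) ℝ) : (symPart M)ᵀ = symPart M := by
  simp [symPart, transpose_add, add_comm]

theorem symPart_eq_self {S : Matrix (Fin p) (Fin p) ℝ} (hS : Sᵀ = S) : symPart S = S := by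
  rw [symPart, hS, ← two_smul ℝ S, smul_smul]
  norm_num

theorem symPart_sub (A B : Matrix (Fin p) (Fin p) ℝ) :
    symPart (A - B) = symPart A - symPart B := by
  simp only [symPart, transpose_sub, ← smul_sub]
  abel_nf

theorem symPart_eq_zero_iff (M : Matrix (Fin p) (Fin p) ℝ) : symPart M = 0 ↔ Mᵀ + M = 0 := by
  rw [symPart, smul_eq_zero, add_comm]
  norm_num

end SymPart

section Frames

variable {H : Type*} [NormedAddCommGroup H] [InnerProductSpace ℝ H] {p : ℕ}

theorem frameOuter_transpose (v w : Fin p → H) : (frameOuter v w)ᵀ = frameOuter w v := by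
  ext i j
  exact real_inner_comm _ _

theorem frameOuter_sub_right (u v w : Fin p → H) :
    frameOuter u (v - w) = frameOuter u v - frameOuter u w := by
  ext i j
  exact inner_sub_right _ _ _

theorem frameOuter_frameAct_right (v w : Fin p → H) (A : Matrix (Fin p) (Fin p) ℝ) :
    frameOuter v (frameAct w A) = frameOuter v w * A := by
  ext i j
  simp [frameOuter, frameAct, inner_sum, real_inner_smul_right, mul_apply, mul_comm]

theorem frameAct_zero (v : Fin p → H) : frameAct v 0 = 0 := by
  funext j
  simp [frameAct]

theorem frameInner_frameAct_left (v w : Fin p → H) (A : Matrix (Fin p) (Fin p) ℝ) :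
    frameInner (frameAct v A) w = trace (Aᵀ * frameOuter v w) := by
  simp [frameInner, frameAct, frameOuter, trace, mul_apply, sum_inner, real_inner_smul_left]

end Frames

section Projections

variable {H : Type*} [NormedAddCommGroup H] [InnerProductSpace ℝ H] {p : ℕ} {φ : Fin p → H}

theorem tangentProj_add_normalProj (φ y : Fin p → H) : tangentProj φ y + normalProj φ y = y :=
  sub_add_cancel _ _

theorem frameInner_normalProj_eq_zero (y : Fin p → H) {η : Fin p → H}
    (hη : frameOuter η φ + frameOuter φ η = 0) : frameInner (normalProj φ y) η = 0 := by
  have hskew : (frameOuter φ η)ᵀ = -frameOuter φ η := by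
    rw [frameOuter_transpose, eq_neg_iff_add_eq_zero, hη]
  rw [normalProj, frameInner_frameAct_left, symPart_transpose]
  exact trace_mul_eq_zero_of_transpose_eq_neg (symPart_transpose _) hskew

variable (hφ : frameOuter φ φ = 1)
include hφ

theorem frameOuter_frameAct_self (A : Matrix (Fin p) (Fin p) ℝ) :
    frameOuter φ (frameAct φ A) = A := by
  rw [frameOuter_frameAct_right, hφ, one_mul]

theorem symPart_frameOuter_tangentProj (y : Fin p → H) :
    symPart (frameOuter φ (tangentProj φ y)) = 0 := by
  rw [tangentProj, frameOuter_sub_right, frameOuter_frameAct_self hφ, symPart_sub,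
    symPart_eq_self (symPart_transpose _), sub_self]

theorem tangentProj_mem_tangent (y : Fin p → H) :
    frameOuter (tangentProj φ y) φ + frameOuter φ (tangentProj φ y) = 0 := by
  rw [← frameOuter_transpose, ← symPart_eq_zero_iff]
  exact symPart_frameOuter_tangentProj hφ y

theorem tangentProj_tangentProj (y : Fin p → H) :
    tangentProj φ (tangentProj φ y) = tangentProj φ y := by
  rw [tangentProj, symPart_frameOuter_tangentProj hφ, frameAct_zero, sub_zero]

theorem tangentProj_frameAct_of_transpose_eq {S : Matrix (Fin p) (Fin p) ℝ} (hS : Sᵀ = S) :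
    tangentProj φ (frameAct φ S) = 0 := by
  rw [tangentProj, frameOuter_frameAct_self hφ, symPart_eq_self hS, sub_self]

end Projections

theorem tangent_normal_proj_properties_general {H : Type*} [NormedAddCommGroup H]
    [InnerProductSpace ℝ H] {p : ℕ} (φ y : Fin p → H)
    (hφ : frameOuter φ φ = 1) :
    (frameOuter (tangentProj φ y) φ + frameOuter φ (tangentProj φ y) = 0) ∧
    (∀ η : Fin p → H, frameOuter η φ + frameOuter φ η = 0 →
      frameInner (normalProj φ y) η = 0) ∧
    y = tangentProj φ y + normalProj φ y ∧
    tangentProj φ (tangentProj φ y) = tangentProj φ y ∧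
    (∀ S : Matrix (Fin p) (Fin p) ℝ, Sᵀ = S → tangentProj φ (frameAct φ S) = 0) :=
  ⟨tangentProj_mem_tangent hφ y, fun _ hη => frameInner_normalProj_eq_zero y hη,
    (tangentProj_add_normalProj φ y).symm, tangentProj_tangentProj hφ y,
    fun _ hS => tangentProj_frameAct_of_transpose_eq hφ hS⟩

/-- Properties of the orthogonal projections onto the tangent and normal
spaces of the Stiefel manifold at an orthonormal frame `φ`. -/
theorem tangent_normal_proj_properties {H : Type*} [NormedAddCommGroup H]
    [InnerProductSpace ℝ H] {p : ℕ} (hp : 1 ≤ p) (φ y : Fin p → H)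
    (hφ : frameOuter φ φ = 1) :
    (frameOuter (tangentProj φ y) φ + frameOuter φ (tangentProj φ y) = 0) ∧
    (∀ η : Fin p → H, frameOuter η φ + frameOuter φ η = 0 →
      frameInner (normalProj φ y) η = 0) ∧
    y = tangentProj φ y + normalProj φ y ∧
    tangentProj φ (tangentProj φ y) = tangentProj φ y ∧
    (∀ S : Matrix (Fin p) (Fin p) ℝ, Sᵀ = S → tangentProj φ (frameAct φ S) = 0) :=
  tangent_normal_proj_properties_general φ y hφ
end
end

section
/- Let φ be an orthonormal p-frame and η ∈ T_φ a tangent vector. Then ⟨⟨φ+η, φ+η⟩⟩ = Iₚ + ⟨⟨η,η⟩⟩, this matrix is symmetric positive definite, and the polar retraction u = (φ+η)·(Iₚ + ⟨⟨η,η⟩⟩)^{−1/2}, where (Iₚ + ⟨⟨η,η⟩⟩)^{−1/2} is the inverse of the positive-definite square root of Iₚ + ⟨⟨η,η⟩⟩, is again an orthonormal p-frame: ⟨⟨u,u⟩⟩ = Iₚ. -/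
open Matrix

noncomputable section

/-!
Tangency kills the cross terms of `⟨⟨φ+η, φ+η⟩⟩`, leaving `I` plus the Gram matrix of `η`,
which is positive semidefinite. Since `⟨⟨v·A, w·B⟩⟩ = Aᵀ ⟨⟨v,w⟩⟩ B`, every factorisation
`⟨⟨v,v⟩⟩ = Sᵀ S` with `S` invertible makes `v·S⁻¹` orthonormal, and a symmetric square root
of `I + ⟨⟨η,η⟩⟩` is such a factorisation.
-/

section FrameOuter

variable {H : Type*} [NormedAddCommGroup H] [InnerProductSpace ℝ H] {p : ℕ}

lemma frameOuter_add_left (u v w : Fin p → H) :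
    frameOuter (u + v) w = frameOuter u w + frameOuter v w := by
  ext i j
  exact inner_add_left (u i) (v i) (w j)

lemma frameOuter_add_right (u v w : Fin p → H) :
    frameOuter u (v + w) = frameOuter u v + frameOuter u w := by
  ext i j
  exact inner_add_right (u i) (v j) (w j)

lemma frameOuter_frameAct (v w : Fin p → H) (A B : Matrix (Fin p) (Fin p) ℝ) :
    frameOuter (frameAct v A) (frameAct w B) = Aᵀ * frameOuter v w * B := by
  ext i j
  simp only [frameOuter, frameAct, mul_apply, transpose_apply, sum_inner, inner_sum,
    real_inner_smul_left, real_inner_smul_right, Finset.sum_mul]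
  exact Finset.sum_congr rfl fun k _ => Finset.sum_congr rfl fun l _ => by ring

lemma frameOuter_frameAct_inv_of_eq_transpose_mul {v : Fin p → H} {S : Matrix (Fin p) (Fin p) ℝ}
    (hS : IsUnit S.det) (hv : frameOuter v v = Sᵀ * S) :
    frameOuter (frameAct v S⁻¹) (frameAct v S⁻¹) = 1 := by
  have hSt : IsUnit Sᵀ.det := by rwa [det_transpose]
  rw [frameOuter_frameAct, hv, transpose_nonsing_inv, ← Matrix.mul_assoc,
    nonsing_inv_mul _ hSt, Matrix.one_mul, mul_nonsing_inv _ hS]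

lemma frameOuter_add_self_of_tangent {φ η : Fin p → H} (hφ : frameOuter φ φ = 1)
    (hη : frameOuter η φ + frameOuter φ η = 0) :
    frameOuter (φ + η) (φ + η) = 1 + frameOuter η η := by
  rw [frameOuter_add_left, frameOuter_add_right, frameOuter_add_right, hφ,
    eq_neg_of_add_eq_zero_right hη]
  abel

end FrameOuter

theorem polar_retraction_orthonormal_general {H : Type*} [NormedAddCommGroup H]
    [InnerProductSpace ℝ H] {p : ℕ} (φ η : Fin p → H)
    (hφ : frameOuter φ φ = 1) (hη : frameOuter η φ + frameOuter φ η = 0) :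
    frameOuter (φ + η) (φ + η) = 1 + frameOuter η η ∧
    (1 + frameOuter η η).PosDef ∧
    ∀ S : Matrix (Fin p) (Fin p) ℝ, S.PosDef → S * S = 1 + frameOuter η η →
      frameOuter (frameAct (φ + η) S⁻¹) (frameAct (φ + η) S⁻¹) = 1 := by
  have hgram := frameOuter_add_self_of_tangent hφ hη
  refine ⟨hgram, PosDef.one.add_posSemidef (posSemidef_gram ℝ η), fun S hS hSS => ?_⟩
  refine frameOuter_frameAct_inv_of_eq_transpose_mul hS.det_pos.ne'.isUnit ?_
  rw [hgram, ← hSS, (isHermitian_iff_isSymm.mp hS.isHermitian).eq]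

/-- For an orthonormal frame `φ` and a tangent vector `η`, one has
`⟨⟨φ+η, φ+η⟩⟩ = I + ⟨⟨η,η⟩⟩`, this matrix is symmetric positive definite, and the polar
retraction `(φ+η)·(I + ⟨⟨η,η⟩⟩)^{-1/2}` is again an orthonormal frame (where the inverse
square root is the inverse of the positive definite square root). -/
theorem polar_retraction_orthonormal {H : Type*} [NormedAddCommGroup H]
    [InnerProductSpace ℝ H] {p : ℕ} (hp : 1 ≤ p) (φ η : Fin p → H)
    (hφ : frameOuter φ φ = 1) (hη : frameOuter η φ + frameOuter φ η = 0) :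
    frameOuter (φ + η) (φ + η) = 1 + frameOuter η η ∧
    (1 + frameOuter η η).PosDef ∧
    ∀ S : Matrix (Fin p) (Fin p) ℝ, S.PosDef → S * S = 1 + frameOuter η η →
      frameOuter (frameAct (φ + η) S⁻¹) (frameAct (φ + η) S⁻¹) = 1 :=
  polar_retraction_orthonormal_general φ η hφ hη
end
end

section
/- Let H be a real Hilbert space with a Hilbert basis (eₙ)ₙ∈ℕ, and let T : H → H be a bounded self-adjoint operator with T eₙ = λₙ eₙ for all n, where λ : ℕ → ℝ is monotone nondecreasing with a spectral gap λ_{p−1} < λ_p. Let ψ : Fin p → H be a p-tuple of vectors with ⟪eₙ, ψⱼ⟫ = 0 for all n < p and all j, and suppose ψ is not identically zero. Then ∑_{j<p} (⟪T ψⱼ, ψⱼ⟫ − λⱼ ‖ψⱼ‖²) ≥ ∑_{j<p} (λ_p − λⱼ) ‖ψⱼ‖² > 0. (This is the positivity of the Riemannian Hessian of the reduced energy on the Grassmann manifold at a ground state, expressed on horizontal lifts whose components are orthogonal to the first p eigenfunctions.) -/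
/-!
Expanding in the eigenbasis, `⟪T x, x⟫ = ∑ₙ λₙ ⟪eₙ, x⟫²` for every `x` (push the expansion of `x`
through the continuous map `T`). For `x` orthogonal to `e₀, …, e_{p-1}` only indices `n ≥ p`, where
`λₙ ≥ λ_p`, contribute, so `⟪T x, x⟫ ≥ λ_p ‖x‖²`. The gap gives `λⱼ ≤ λ_{p-1} < λ_p` for `j < p`,
hence strict positivity as soon as some `ψⱼ ≠ 0`.
-/

namespace HilbertBasis

variable {ι E : Type*} [NormedAddCommGroup E] [InnerProductSpace ℝ E] (e : HilbertBasis ι ℝ E)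

theorem hasSum_inner_sq (x : E) : HasSum (fun i => (inner ℝ (e i) x : ℝ) ^ 2) (‖x‖ ^ 2) := by
  simpa only [real_inner_comm x, sq, real_inner_self_eq_norm_sq] using e.hasSum_inner_mul_inner x x

theorem hasSum_inner_map_self_of_apply_eq_smul {T : E →L[ℝ] E} {lam : ι → ℝ}
    (heig : ∀ i, T (e i) = lam i • e i) (x : E) :
    HasSum (fun i => lam i * (inner ℝ (e i) x : ℝ) ^ 2) (inner ℝ (T x) x : ℝ) := by
  rw [real_inner_comm]
  convert! ((e.hasSum_repr x).mapL T).mapL (innerSL ℝ x) using 1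
  ext i
  rw [map_smul, heig, innerSL_apply_apply, inner_smul_right,
    inner_smul_right, e.repr_apply_apply, real_inner_comm x]
  ring

theorem mul_norm_sq_le_inner_map_self {T : E →L[ℝ] E} {lam : ι → ℝ}
    (heig : ∀ i, T (e i) = lam i • e i) {c : ℝ} {x : E}
    (hx : ∀ i, lam i < c → (inner ℝ (e i) x : ℝ) = 0) :
    c * ‖x‖ ^ 2 ≤ (inner ℝ (T x) x : ℝ) := by
  refine hasSum_le (fun i => ?_) ((e.hasSum_inner_sq x).mul_left c)
    (e.hasSum_inner_map_self_of_apply_eq_smul heig x)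
  by_cases hi : lam i < c
  · simp [hx i hi]
  · exact mul_le_mul_of_nonneg_right (not_lt.1 hi) (sq_nonneg _)

end HilbertBasis

theorem hessian_positive_general {H : Type*} [NormedAddCommGroup H] [InnerProductSpace ℝ H]
    (e : HilbertBasis ℕ ℝ H) (T : H →L[ℝ] H)
    (lam : ℕ → ℝ) (hlam : Monotone lam) (heig : ∀ n : ℕ, T (e n) = lam n • e n)
    (p : ℕ) (hgap : lam (p - 1) < lam p)
    (ψ : Fin p → H) (hψ : ∀ n < p, ∀ j : Fin p, (inner ℝ (e n) (ψ j) : ℝ) = 0)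
    (hne : ψ ≠ 0) :
    (∑ j : Fin p, ((inner ℝ (T (ψ j)) (ψ j) : ℝ) - lam j * ‖ψ j‖ ^ 2) ≥
      ∑ j : Fin p, (lam p - lam j) * ‖ψ j‖ ^ 2) ∧
    0 < ∑ j : Fin p, (lam p - lam j) * ‖ψ j‖ ^ 2 := by
  have hlt_gap (j : Fin p) : lam j < lam p := (hlam (Nat.le_sub_one_of_lt j.isLt)).trans_lt hgap
  have hrayleigh (j : Fin p) : lam p * ‖ψ j‖ ^ 2 ≤ inner ℝ (T (ψ j)) (ψ j) :=
    e.mul_norm_sq_le_inner_map_self heig fun n hn => hψ n (hlam.reflect_lt hn) j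
  refine ⟨Finset.sum_le_sum fun j _ => by linarith [hrayleigh j], ?_⟩
  obtain ⟨j, hj⟩ := Function.ne_iff.1 hne
  exact Finset.sum_pos' (fun i _ => mul_nonneg (sub_nonneg.2 (hlt_gap i).le) (sq_nonneg _))
    ⟨j, Finset.mem_univ j, mul_pos (sub_pos.2 (hlt_gap j)) (by positivity)⟩

/-- Positivity of the Riemannian Hessian on horizontal lifts: with a
spectral gap `λ_{p-1} < λ_p`, a nonzero `p`-tuple `ψ` whose components are orthogonal to
the first `p` eigenfunctions satisfies
`∑ⱼ (⟪T ψⱼ, ψⱼ⟫ − λⱼ ‖ψⱼ‖²) ≥ ∑ⱼ (λ_p − λⱼ) ‖ψⱼ‖² > 0`. -/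
theorem hessian_positive {H : Type*} [NormedAddCommGroup H] [InnerProductSpace ℝ H]
    [CompleteSpace H] (e : HilbertBasis ℕ ℝ H) (T : H →L[ℝ] H)
    (hT : ∀ x y : H, (inner ℝ (T x) y : ℝ) = (inner ℝ x (T y) : ℝ))
    (lam : ℕ → ℝ) (hlam : Monotone lam) (heig : ∀ n : ℕ, T (e n) = lam n • e n)
    (p : ℕ) (hp : 1 ≤ p) (hgap : lam (p - 1) < lam p)
    (ψ : Fin p → H) (hψ : ∀ n < p, ∀ j : Fin p, (inner ℝ (e n) (ψ j) : ℝ) = 0)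
    (hne : ψ ≠ 0) :
    (∑ j : Fin p, ((inner ℝ (T (ψ j)) (ψ j) : ℝ) - lam j * ‖ψ j‖ ^ 2) ≥
      ∑ j : Fin p, (lam p - lam j) * ‖ψ j‖ ^ 2) ∧
    0 < ∑ j : Fin p, (lam p - lam j) * ‖ψ j‖ ^ 2 :=
  hessian_positive_general e T lam hlam heig p hgap ψ hψ hne
end
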